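/- Let 1 < p, q < ∞ and max{−n/p, −m/p} < α < min{n(1−1/p), m(1−1/p)}. Then for every rectangle R = Q₁×Q₂ (product of cubes in ℝⁿ and ℝᵐ), ‖χ_R‖_{K̇_{p,q}^{α}} · ‖χ_R‖_{K̇_{p',q'}^{−α}} ≈ |R|, with implicit constants independent of R. -/

import Mathlib

open MeasureTheory Set ENNReal NNReal
noncomputable section

/-- The product space ℝⁿ × ℝᵐ. -/
abbrev ED (n m : ℕ) := (Fin n → ℝ) × (Fin m → ℝ)

/-- The open cube `Q(x,r)` in ℝⁿ centered at `x` of side length `r`. -/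
def cube (n : ℕ) (x : Fin n → ℝ) (r : ℝ) : Set (Fin n → ℝ) :=
  {y | ∀ i, |y i - x i| < r / 2}

/-- The rectangle `R((x,y),r,s) = Q(x,r) × Q(y,s)`. -/
def rect (n m : ℕ) (x : Fin n → ℝ) (y : Fin m → ℝ) (r s : ℝ) : Set (ED n m) :=
  (cube n x r) ×ˢ (cube m y s)

/-- `R` is an axis-parallel rectangle (product of cubes with positive side lengths). -/
def IsRect (n m : ℕ) (R : Set (ED n m)) : Prop :=
  ∃ x y r s, 0 < r ∧ 0 < s ∧ R = rect n m x y r s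

/-- The dyadic product annulus `I_i × J_j`. -/
def prodAnnulus (n m : ℕ) (i j : ℤ) : Set (ED n m) :=
  ((cube n 0 ((2:ℝ)^i)) \ (cube n 0 ((2:ℝ)^(i-1)))) ×ˢ
    ((cube m 0 ((2:ℝ)^j)) \ (cube m 0 ((2:ℝ)^(j-1))))

/-- The dyadic rectangle `R_{i,j} = Q(0,2^i) × Q(0,2^j)`. -/
def dyadicRect (n m : ℕ) (i j : ℤ) : Set (ED n m) :=
  (cube n 0 ((2:ℝ)^i)) ×ˢ (cube m 0 ((2:ℝ)^j))

/-- `L^p` norm (for `0 < p < ∞`) of an `ℝ≥0∞`-valued function. -/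
def lpNormE (n m : ℕ) (p : ℝ) (f : ED n m → ℝ≥0∞) : ℝ≥0∞ :=
  (∫⁻ z : ED n m, f z ^ p) ^ (1/p)

/-- The product Herz norm `‖f‖_{K̇_{p,q}^α}` of an `ℝ≥0∞`-valued function. -/
def herzNorm (n m : ℕ) (α p q : ℝ) (f : ED n m → ℝ≥0∞) : ℝ≥0∞ :=
  (∑' i : ℤ, ∑' j : ℤ,
    (ENNReal.ofReal ((2:ℝ) ^ (((i:ℝ) + (j:ℝ)) * α)) *
      lpNormE n m p ((prodAnnulus n m i j).indicator f)) ^ q) ^ (1/q)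

/-- Lift of a real-valued function to `ℝ≥0∞` via the absolute value. -/
def liftE (n m : ℕ) (f : ED n m → ℝ) : ED n m → ℝ≥0∞ := fun z => (‖f z‖₊ : ℝ≥0∞)

/-- The product Herz norm of a real-valued function. -/
def herzNormR (n m : ℕ) (α p q : ℝ) (f : ED n m → ℝ) : ℝ≥0∞ :=
  herzNorm n m α p q (liftE n m f)

/-- The product Morrey-Herz norm `‖f‖_{MK̇_{p,q}^{α,λ}}` of an `ℝ≥0∞`-valued function. -/
def morreyHerzNorm (n m : ℕ) (α p q lam : ℝ) (f : ED n m → ℝ≥0∞) : ℝ≥0∞ :=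
  ⨆ L₁ : ℤ, ⨆ L₂ : ℤ,
    ENNReal.ofReal ((2:ℝ) ^ (-(((L₁:ℝ)) + (L₂:ℝ)) * lam)) *
      herzNorm n m α p q ((dyadicRect n m L₁ L₂).indicator f)

/-- The product Morrey-Herz norm of a real-valued function. -/
def morreyHerzNormR (n m : ℕ) (α p q lam : ℝ) (f : ED n m → ℝ) : ℝ≥0∞ :=
  morreyHerzNorm n m α p q lam (liftE n m f)

/-- A product Herz-block: supported in a dyadic rectangle `R_{l₁,l₂}`
with Herz norm at most `2^{-λ(l₁+l₂)}`. -/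
def IsHerzBlock (n m : ℕ) (α p q lam : ℝ) (b : ED n m → ℝ) : Prop :=
  ∃ l₁ l₂ : ℤ, (∀ z ∉ dyadicRect n m l₁ l₂, b z = 0) ∧
    herzNormR n m α p q b ≤ ENNReal.ofReal ((2:ℝ) ^ (-(lam * ((l₁:ℝ) + (l₂:ℝ)))))

/-- Membership in the product block-Herz space `BK̇_{p,q}^{α,λ}`. -/
def MemBlockHerz (n m : ℕ) (α p q lam : ℝ) (f : ED n m → ℝ) : Prop :=
  ∃ (c : ℕ → ℝ) (b : ℕ → ED n m → ℝ),
    (∀ k, IsHerzBlock n m α p q lam (b k)) ∧ (Summable fun k => |c k|) ∧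
    (∀ z, HasSum (fun k => c k * b k z) (f z))

/-- The product block-Herz norm: infimum of `Σ|λ_k|` over decompositions into blocks. -/
def blockHerzNorm (n m : ℕ) (α p q lam : ℝ) (f : ED n m → ℝ) : ℝ≥0∞ :=
  sInf { S : ℝ≥0∞ | ∃ (c : ℕ → ℝ) (b : ℕ → ED n m → ℝ),
    (∀ k, IsHerzBlock n m α p q lam (b k)) ∧ (Summable fun k => |c k|) ∧
    (∀ z, HasSum (fun k => c k * b k z) (f z)) ∧
    S = ENNReal.ofReal (∑' k, |c k|) }

/-- The strong maximal operator on `ℝ≥0∞`-valued functions. -/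
def msE (n m : ℕ) (f : ED n m → ℝ≥0∞) (z : ED n m) : ℝ≥0∞ :=
  ⨆ (x : Fin n → ℝ) (y : Fin m → ℝ) (r : ℝ) (s : ℝ)
    (_ : 0 < r) (_ : 0 < s) (_ : z ∈ rect n m x y r s),
      (volume (rect n m x y r s))⁻¹ * ∫⁻ w in rect n m x y r s, f w

/-- The strong maximal operator of a real-valued function. -/
def msR (n m : ℕ) (f : ED n m → ℝ) : ED n m → ℝ≥0∞ := msE n m (liftE n m f)

/-- The indicator (characteristic) function of a set, real-valued. -/
def herzChar (n m : ℕ) (S : Set (ED n m)) : ED n m → ℝ := S.indicator 1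

/-- Conjugate exponent `p' = p/(p-1)`. -/
def rconj (p : ℝ) : ℝ := p / (p - 1)

/-!
The Herz norm of `χ_{Q₁ × Q₂}` factors as `K(Q₁) K(Q₂)`, where `K(Q)` is the `ℓ^q` norm of the
sequence `2^{iα} |Q ∩ A_i|^{1/p}` over the dyadic annuli `A_i`. Writing
`|Q| = Σ_i (2^{iα} |Q ∩ A_i|^{1/p}) (2^{-iα} |Q ∩ A_i|^{1/p'})` and applying Hölder's inequality
in `i` gives the lower bound. For the upper bound, a cube `Q(x, r)` with `‖x‖ ≤ r` lies in a
centred cube of side `≈ r`; there `|Q ∩ A_i| ≤ 2^{in}`, so both sums are geometric series dominated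
by their top term because `α + n/p > 0` and `-α + n/p' > 0`. A cube with `‖x‖ > r` meets only
three consecutive annuli, on which the weights `2^{±iα}` are comparable.
-/

namespace ProductHerz

lemma two_rpow_add (a b : ℝ) : (2 : ℝ≥0∞) ^ (a + b) = 2 ^ a * 2 ^ b :=
  ENNReal.rpow_add a b two_ne_zero ofNat_ne_top

lemma ofReal_two_rpow (x : ℝ) : ENNReal.ofReal ((2 : ℝ) ^ x) = (2 : ℝ≥0∞) ^ x := by
  rw [← ENNReal.ofReal_rpow_of_pos two_pos, ENNReal.ofReal_ofNat]

lemma cube_eq_ball {n : ℕ} (x : Fin n → ℝ) {r : ℝ} (hr : 0 < r) :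
    cube n x r = Metric.ball x (r / 2) := by
  ext y
  simp [cube, ball_pi x (half_pos hr), Real.dist_eq]

lemma measurableSet_cube {n : ℕ} (x : Fin n → ℝ) {r : ℝ} (hr : 0 < r) :
    MeasurableSet (cube n x r) := by
  rw [cube_eq_ball x hr]
  exact measurableSet_ball

lemma volume_cube {n : ℕ} (x : Fin n → ℝ) {r : ℝ} (hr : 0 < r) :
    volume (cube n x r) = ENNReal.ofReal r ^ n := by
  rw [cube_eq_ball x hr, Real.volume_pi_ball x (half_pos hr), mul_div_cancel₀ r two_ne_zero,
    Fintype.card_fin, ENNReal.ofReal_pow hr.le]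

lemma cube_subset_cube {n : ℕ} (x : Fin n → ℝ) {r r' : ℝ} (h : r ≤ r') :
    cube n x r ⊆ cube n x r' :=
  fun _ hy i => (hy i).trans_le (by linarith)

lemma mem_cube_zero {n : ℕ} {y : Fin n → ℝ} {r : ℝ} (hr : 0 < r) :
    y ∈ cube n 0 r ↔ ‖y‖ < r / 2 := by
  rw [cube_eq_ball 0 hr, mem_ball_zero_iff]

def annulus (n : ℕ) (i : ℤ) : Set (Fin n → ℝ) :=
  cube n 0 ((2 : ℝ) ^ i) \ cube n 0 ((2 : ℝ) ^ (i - 1))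

lemma measurableSet_annulus (n : ℕ) (i : ℤ) : MeasurableSet (annulus n i) :=
  (measurableSet_cube 0 (zpow_pos two_pos i)).diff (measurableSet_cube 0 (zpow_pos two_pos _))

lemma mem_annulus {n : ℕ} {y : Fin n → ℝ} {i : ℤ} :
    y ∈ annulus n i ↔ (2 : ℝ) ^ (i - 1) / 2 ≤ ‖y‖ ∧ ‖y‖ < (2 : ℝ) ^ i / 2 := by
  rw [annulus, mem_sdiff, mem_cube_zero (zpow_pos two_pos _), mem_cube_zero (zpow_pos two_pos _),
    not_lt, and_comm]

lemma pairwise_disjoint_annulus (n : ℕ) : Pairwise (Function.onFun Disjoint (annulus n)) := by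
  have key : ∀ i j : ℤ, i < j → Disjoint (annulus n i) (annulus n j) := by
    refine fun i j hij => Set.disjoint_left.2 fun y hi hj => ?_
    have : (2 : ℝ) ^ i ≤ 2 ^ (j - 1) := zpow_le_zpow_right₀ one_le_two (by omega)
    linarith [(mem_annulus.1 hi).2, (mem_annulus.1 hj).1]
  intro i j hij
  rcases hij.lt_or_gt with h | h
  exacts [key i j h, (key j i h).symm]

lemma iUnion_annulus (n : ℕ) : ⋃ i, annulus n i = {0}ᶜ := by
  ext y
  simp only [mem_iUnion, mem_annulus, mem_compl_iff, mem_singleton_iff, ← norm_pos_iff]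
  constructor
  · rintro ⟨i, hi, -⟩
    exact lt_of_lt_of_le (by positivity) hi
  · intro hy
    obtain ⟨k, hk, hk'⟩ := exists_mem_Ico_zpow hy one_lt_two
    refine ⟨k + 2, ?_, ?_⟩
    · rw [show k + 2 - 1 = k + 1 by ring, zpow_add_one₀ two_ne_zero]
      linarith
    · rw [zpow_add₀ two_ne_zero, zpow_two]
      rw [zpow_add_one₀ two_ne_zero] at hk'
      linarith

lemma volume_eq_tsum_volume_inter_annulus {n : ℕ} (hn : 0 < n) {Q : Set (Fin n → ℝ)}
    (hQ : MeasurableSet Q) : volume Q = ∑' i, volume (Q ∩ annulus n i) := by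
  have : Nonempty (Fin n) := ⟨⟨0, hn⟩⟩
  calc volume Q = volume (Q \ {0}) := (measure_sdiff_null (measure_singleton 0)).symm
    _ = volume (⋃ i, Q ∩ annulus n i) := by rw [← inter_iUnion, iUnion_annulus, sdiff_eq]
    _ = ∑' i, volume (Q ∩ annulus n i) := measure_iUnion
      (fun i j hij => (pairwise_disjoint_annulus n hij).mono inter_subset_right inter_subset_right)
      (fun i => hQ.inter (measurableSet_annulus n i))

lemma volume_inter_annulus_le {n : ℕ} (Q : Set (Fin n → ℝ)) (i : ℤ) :
    volume (Q ∩ annulus n i) ≤ 2 ^ ((i : ℝ) * n) := by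
  calc volume (Q ∩ annulus n i) ≤ volume (cube n 0 ((2 : ℝ) ^ i)) :=
        measure_mono (inter_subset_right.trans sdiff_subset)
    _ = 2 ^ ((i : ℝ) * n) := by
        rw [volume_cube 0 (zpow_pos two_pos i), ← Real.rpow_intCast, ofReal_two_rpow,
          ENNReal.rpow_mul_natCast]

lemma inter_annulus_eq_empty_of_subset {n : ℕ} {Q : Set (Fin n → ℝ)} {N i : ℤ}
    (hQ : Q ⊆ cube n 0 ((2 : ℝ) ^ N)) (hi : N < i) : Q ∩ annulus n i = ∅ := by
  refine Set.disjoint_iff_inter_eq_empty.1 (Disjoint.mono_left hQ ?_)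
  exact Disjoint.mono_left (cube_subset_cube 0 (zpow_le_zpow_right₀ one_le_two
    (by omega : N ≤ i - 1))) disjoint_sdiff_right

lemma inter_annulus_eq_empty_of_disjoint {n : ℕ} {Q : Set (Fin n → ℝ)} {M i : ℤ}
    (hQ : Disjoint Q (cube n 0 ((2 : ℝ) ^ M))) (hi : i ≤ M) : Q ∩ annulus n i = ∅ :=
  Set.disjoint_iff_inter_eq_empty.1 (hQ.mono_right
    (sdiff_subset.trans (cube_subset_cube 0 (zpow_le_zpow_right₀ one_le_two hi))))

lemma tsum_mul_le_Lp_mul_Lq {q q' : ℝ} (h : q.HolderConjugate q') (f g : ℤ → ℝ≥0∞) :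
    ∑' i, f i * g i ≤ (∑' i, f i ^ q) ^ (1 / q) * (∑' i, g i ^ q') ^ (1 / q') := by
  simpa [lintegral_count] using ENNReal.lintegral_mul_le_Lp_mul_Lq Measure.count h
    (f := f) (g := g) measurable_from_top.aemeasurable measurable_from_top.aemeasurable

lemma rpow_one_div_mul_rpow_one_div {s t : ℝ} (h : s.HolderConjugate t) (x : ℝ≥0∞) :
    x ^ (1 / s) * x ^ (1 / t) = x := by
  rw [← ENNReal.rpow_add_of_nonneg _ _ (one_div_nonneg.2 h.nonneg) (one_div_nonneg.2 h.symm.nonneg),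
    one_div, one_div, h.inv_add_inv_eq_one, ENNReal.rpow_one]

lemma tsum_ite_le_two_rpow_eq (c : ℝ) (N : ℤ) :
    ∑' i : ℤ, (if i ≤ N then (2 : ℝ≥0∞) ^ ((i : ℝ) * c) else 0) =
      2 ^ ((N : ℝ) * c) * (1 - 2 ^ (-c))⁻¹ := by
  have hinj : Function.Injective (fun k : ℕ => N - k) := fun a b h => by simpa using h
  have hsupp : Function.support (fun i : ℤ => if i ≤ N then (2 : ℝ≥0∞) ^ ((i : ℝ) * c) else 0)
      ⊆ range (fun k : ℕ => N - k) := by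
    intro i hi
    refine ⟨(N - i).toNat, ?_⟩
    have : i ≤ N := by by_contra h; simp [h] at hi
    simp only
    omega
  rw [← hinj.tsum_eq hsupp, ← ENNReal.tsum_geometric, ← ENNReal.tsum_mul_left]
  refine tsum_congr fun k => ?_
  rw [if_pos (by omega), ← ENNReal.rpow_natCast, ← ENNReal.rpow_mul, ← two_rpow_add]
  congr 1
  push_cast
  ring

lemma Lq_le_of_le_two_rpow {q c : ℝ} (hq : 0 < q) {f : ℤ → ℝ≥0∞} {N : ℤ}
    (hf : ∀ i, f i ≤ 2 ^ ((i : ℝ) * c)) (hN : ∀ i, N < i → f i = 0) :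
    (∑' i, f i ^ q) ^ (1 / q) ≤ 2 ^ ((N : ℝ) * c) * ((1 - 2 ^ (-(c * q)))⁻¹) ^ (1 / q) := by
  have hterm : ∀ i, f i ^ q ≤ if i ≤ N then (2 : ℝ≥0∞) ^ ((i : ℝ) * (c * q)) else 0 := by
    intro i
    split_ifs with hi
    · rw [← mul_assoc, ENNReal.rpow_mul]
      exact ENNReal.rpow_le_rpow (hf i) hq.le
    · rw [hN i (not_le.1 hi), ENNReal.zero_rpow_of_pos hq]
  calc (∑' i, f i ^ q) ^ (1 / q)
      ≤ (2 ^ ((N : ℝ) * (c * q)) * (1 - 2 ^ (-(c * q)))⁻¹) ^ (1 / q) := by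
        rw [← tsum_ite_le_two_rpow_eq]
        exact ENNReal.rpow_le_rpow (ENNReal.tsum_le_tsum hterm) (by positivity)
    _ = 2 ^ ((N : ℝ) * c) * ((1 - 2 ^ (-(c * q)))⁻¹) ^ (1 / q) := by
        rw [ENNReal.mul_rpow_of_nonneg _ _ (by positivity), ← ENNReal.rpow_mul]
        congr 2
        field_simp

lemma Lq_le_of_support_subset {q : ℝ} (hq : 0 < q) {f : ℤ → ℝ≥0∞} {s : Finset ℤ} {B : ℝ≥0∞}
    (hf : ∀ i ∈ s, f i ≤ B) (hs : ∀ i ∉ s, f i = 0) :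
    (∑' i, f i ^ q) ^ (1 / q) ≤ (s.card : ℝ≥0∞) ^ (1 / q) * B := by
  calc (∑' i, f i ^ q) ^ (1 / q) = (∑ i ∈ s, f i ^ q) ^ (1 / q) := by
        rw [tsum_eq_sum fun i hi => by rw [hs i hi, ENNReal.zero_rpow_of_pos hq]]
    _ ≤ (s.card * B ^ q) ^ (1 / q) := by
        refine ENNReal.rpow_le_rpow ?_ (by positivity)
        rw [← nsmul_eq_mul]
        exact Finset.sum_le_card_nsmul _ _ _ fun i hi => ENNReal.rpow_le_rpow (hf i hi) hq.le
    _ = (s.card : ℝ≥0∞) ^ (1 / q) * B := by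
        rw [ENNReal.mul_rpow_of_nonneg _ _ (by positivity), ← ENNReal.rpow_mul,
          mul_one_div_cancel hq.ne', ENNReal.rpow_one]

/-- The one-parameter Herz norm `‖χ_Q‖_{K̇_{p,q}^{α}(ℝⁿ)}`. -/
def herzNormIndicator (n : ℕ) (α p q : ℝ) (Q : Set (Fin n → ℝ)) : ℝ≥0∞ :=
  (∑' i : ℤ, (2 ^ ((i : ℝ) * α) * volume (Q ∩ annulus n i) ^ (1 / p)) ^ q) ^ (1 / q)

lemma lpNormE_indicator_one {n m : ℕ} {p : ℝ} (hp : 0 < p) {S : Set (ED n m)}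
    (hS : MeasurableSet S) : lpNormE n m p (S.indicator 1) = volume S ^ (1 / p) := by
  have : (fun z => S.indicator (1 : ED n m → ℝ≥0∞) z ^ p) = S.indicator 1 := by
    ext z
    by_cases hz : z ∈ S <;> simp [hz, ENNReal.zero_rpow_of_pos hp]
  rw [lpNormE, this, lintegral_indicator_one hS]

lemma herzNormR_herzChar_prod {n m : ℕ} {α p q : ℝ} (hp : 0 < p) (hq : 0 < q)
    {Q₁ : Set (Fin n → ℝ)} {Q₂ : Set (Fin m → ℝ)} (h₁ : MeasurableSet Q₁) (h₂ : MeasurableSet Q₂) :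
    herzNormR n m α p q (herzChar n m (Q₁ ×ˢ Q₂)) =
      herzNormIndicator n α p q Q₁ * herzNormIndicator m α p q Q₂ := by
  have hlift : liftE n m (herzChar n m (Q₁ ×ˢ Q₂)) = (Q₁ ×ˢ Q₂).indicator 1 := by
    ext z
    by_cases hz : z ∈ Q₁ ×ˢ Q₂ <;> simp [liftE, herzChar, hz]
  have hterm : ∀ i j : ℤ,
      (ENNReal.ofReal ((2 : ℝ) ^ (((i : ℝ) + j) * α)) *
        lpNormE n m p ((prodAnnulus n m i j).indicator ((Q₁ ×ˢ Q₂).indicator 1))) ^ q =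
      (2 ^ ((i : ℝ) * α) * volume (Q₁ ∩ annulus n i) ^ (1 / p)) ^ q *
        (2 ^ ((j : ℝ) * α) * volume (Q₂ ∩ annulus m j) ^ (1 / p)) ^ q := by
    intro i j
    have hprod : prodAnnulus n m i j ∩ Q₁ ×ˢ Q₂ = (Q₁ ∩ annulus n i) ×ˢ (Q₂ ∩ annulus m j) := by
      rw [prodAnnulus, ← annulus, ← annulus, prod_inter_prod, inter_comm, inter_comm (annulus m j)]
    rw [indicator_indicator, hprod, lpNormE_indicator_one hp
        (((h₁.inter (measurableSet_annulus n i)).prod (h₂.inter (measurableSet_annulus m j)))),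
      Measure.volume_eq_prod, Measure.prod_prod, ofReal_two_rpow, add_mul, two_rpow_add,
      ENNReal.mul_rpow_of_nonneg (volume _) _ (by positivity : 0 ≤ 1 / p),
      ← ENNReal.mul_rpow_of_nonneg _ _ hq.le, mul_mul_mul_comm]
  rw [herzNormR, herzNorm, hlift, herzNormIndicator, herzNormIndicator,
    ← ENNReal.mul_rpow_of_nonneg _ _ (by positivity), ← ENNReal.tsum_mul_right]
  simp_rw [hterm, ENNReal.tsum_mul_left]

lemma volume_le_herzNormIndicator_mul {n : ℕ} (hn : 0 < n) {p q p' q' : ℝ}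
    (hpc : p.HolderConjugate p') (hqc : q.HolderConjugate q') (α : ℝ) {Q : Set (Fin n → ℝ)}
    (hQ : MeasurableSet Q) :
    volume Q ≤ herzNormIndicator n α p q Q * herzNormIndicator n (-α) p' q' Q := by
  have hsplit : ∀ i : ℤ, volume (Q ∩ annulus n i) =
      (2 ^ ((i : ℝ) * α) * volume (Q ∩ annulus n i) ^ (1 / p)) *
        (2 ^ ((i : ℝ) * -α) * volume (Q ∩ annulus n i) ^ (1 / p')) := by
    intro i
    rw [mul_mul_mul_comm, ← two_rpow_add, rpow_one_div_mul_rpow_one_div hpc, mul_neg,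
      add_neg_cancel, ENNReal.rpow_zero, one_mul]
  rw [volume_eq_tsum_volume_inter_annulus hn hQ, tsum_congr hsplit]
  exact tsum_mul_le_Lp_mul_Lq hqc _ _

lemma herzNormIndicator_le_of_subset_cube {n : ℕ} {α p q : ℝ} (hp : 0 < p) (hq : 0 < q)
    {Q : Set (Fin n → ℝ)} {N : ℤ} (hQ : Q ⊆ cube n 0 ((2 : ℝ) ^ N)) :
    herzNormIndicator n α p q Q ≤
      2 ^ ((N : ℝ) * (α + n / p)) * ((1 - 2 ^ (-((α + n / p) * q)))⁻¹) ^ (1 / q) := by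
  refine Lq_le_of_le_two_rpow hq (fun i => ?_) (fun i hi => ?_)
  · calc 2 ^ ((i : ℝ) * α) * volume (Q ∩ annulus n i) ^ (1 / p)
        ≤ 2 ^ ((i : ℝ) * α) * (2 ^ ((i : ℝ) * n)) ^ (1 / p) := by
          gcongr
          exact volume_inter_annulus_le Q i
      _ = 2 ^ ((i : ℝ) * (α + n / p)) := by
          rw [← ENNReal.rpow_mul, ← two_rpow_add]
          ring_nf
  · rw [inter_annulus_eq_empty_of_subset hQ hi, measure_empty,
      ENNReal.zero_rpow_of_pos (by positivity), mul_zero]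

lemma herzNormIndicator_mul_le_of_subset_cube {n : ℕ} {α p q p' q' : ℝ}
    (hpc : p.HolderConjugate p') (hqc : q.HolderConjugate q')
    {Q : Set (Fin n → ℝ)} {N : ℤ} (hQ : Q ⊆ cube n 0 ((2 : ℝ) ^ N)) :
    herzNormIndicator n α p q Q * herzNormIndicator n (-α) p' q' Q ≤
      ((1 - 2 ^ (-((α + n / p) * q)))⁻¹) ^ (1 / q) *
        ((1 - 2 ^ (-((-α + n / p') * q')))⁻¹) ^ (1 / q') * 2 ^ ((N : ℝ) * n) := by
  have hexp : (N : ℝ) * (α + n / p) + (N : ℝ) * (-α + n / p') = (N : ℝ) * n := by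
    have := hpc.inv_add_inv_eq_one
    field_simp
    linear_combination (N : ℝ) * n * this
  calc herzNormIndicator n α p q Q * herzNormIndicator n (-α) p' q' Q
      ≤ (2 ^ ((N : ℝ) * (α + n / p)) * ((1 - 2 ^ (-((α + n / p) * q)))⁻¹) ^ (1 / q)) *
        (2 ^ ((N : ℝ) * (-α + n / p')) * ((1 - 2 ^ (-((-α + n / p') * q')))⁻¹) ^ (1 / q')) :=
        mul_le_mul' (herzNormIndicator_le_of_subset_cube hpc.pos hqc.pos hQ)
          (herzNormIndicator_le_of_subset_cube hpc.symm.pos hqc.symm.pos hQ)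
    _ = _ := by
        rw [mul_mul_mul_comm, ← two_rpow_add, hexp, mul_comm]

lemma herzNormIndicator_le_of_subset_shell {n : ℕ} {α p q : ℝ} (hp : 0 < p) (hq : 0 < q)
    {Q : Set (Fin n → ℝ)} {M : ℤ} {k : ℕ}
    (hQ : Q ⊆ cube n 0 ((2 : ℝ) ^ (M + k)) \ cube n 0 ((2 : ℝ) ^ M)) :
    herzNormIndicator n α p q Q ≤
      (k : ℝ≥0∞) ^ (1 / q) * (2 ^ ((M : ℝ) * α + k * |α|) * volume Q ^ (1 / p)) := by
  have hcard : (Finset.Ioc M (M + k)).card = k := by simp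
  refine (Lq_le_of_support_subset (s := Finset.Ioc M (M + k)) hq (fun i hi => ?_)
    (fun i hi => ?_)).trans_eq (by rw [hcard])
  · rw [Finset.mem_Ioc] at hi
    have hi₁ : (M : ℝ) < i := by exact_mod_cast hi.1
    have hi₂ : (i : ℝ) ≤ M + k := by exact_mod_cast hi.2
    have hw : (i : ℝ) * α ≤ M * α + k * |α| := by
      have h₁ : ((i : ℝ) - M) * α ≤ ((i : ℝ) - M) * |α| :=
        mul_le_mul_of_nonneg_left (le_abs_self α) (by linarith)
      have h₂ : ((i : ℝ) - M) * |α| ≤ k * |α| :=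
        mul_le_mul_of_nonneg_right (by linarith) (abs_nonneg α)
      linarith
    exact mul_le_mul' (ENNReal.rpow_le_rpow_of_exponent_le one_le_two hw)
      (ENNReal.rpow_le_rpow (measure_mono inter_subset_left) (by positivity))
  · have hi' : M + k < i ∨ i ≤ M := by rw [Finset.mem_Ioc] at hi; omega
    rcases hi' with hi' | hi'
    · rw [inter_annulus_eq_empty_of_subset (hQ.trans sdiff_subset) hi', measure_empty,
        ENNReal.zero_rpow_of_pos (by positivity), mul_zero]
    · rw [inter_annulus_eq_empty_of_disjoint (disjoint_sdiff_left.mono_left hQ) hi',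
        measure_empty, ENNReal.zero_rpow_of_pos (by positivity), mul_zero]

lemma herzNormIndicator_mul_le_of_subset_shell {n : ℕ} {α p q p' q' : ℝ}
    (hpc : p.HolderConjugate p') (hqc : q.HolderConjugate q')
    {Q : Set (Fin n → ℝ)} {M : ℤ} {k : ℕ}
    (hQ : Q ⊆ cube n 0 ((2 : ℝ) ^ (M + k)) \ cube n 0 ((2 : ℝ) ^ M)) :
    herzNormIndicator n α p q Q * herzNormIndicator n (-α) p' q' Q ≤
      k * 2 ^ (2 * k * |α|) * volume Q := by
  calc herzNormIndicator n α p q Q * herzNormIndicator n (-α) p' q' Q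
      ≤ ((k : ℝ≥0∞) ^ (1 / q) * (2 ^ ((M : ℝ) * α + k * |α|) * volume Q ^ (1 / p))) *
        ((k : ℝ≥0∞) ^ (1 / q') * (2 ^ ((M : ℝ) * -α + k * |-α|) * volume Q ^ (1 / p'))) :=
        mul_le_mul' (herzNormIndicator_le_of_subset_shell hpc.pos hqc.pos hQ)
          (herzNormIndicator_le_of_subset_shell hpc.symm.pos hqc.symm.pos hQ)
    _ = ((k : ℝ≥0∞) ^ (1 / q) * (k : ℝ≥0∞) ^ (1 / q')) *
          (2 ^ ((M : ℝ) * α + k * |α|) * 2 ^ ((M : ℝ) * -α + k * |-α|)) *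
          (volume Q ^ (1 / p) * volume Q ^ (1 / p')) := by ring
    _ = k * 2 ^ (2 * k * |α|) * volume Q := by
        rw [rpow_one_div_mul_rpow_one_div hqc, rpow_one_div_mul_rpow_one_div hpc, ← two_rpow_add,
          abs_neg]
        ring_nf

lemma cube_subset_cube_zero {n : ℕ} {x : Fin n → ℝ} {r R : ℝ} (hr : 0 < r) (hx : ‖x‖ ≤ r)
    (hR : 3 * r ≤ R) : cube n x r ⊆ cube n 0 R := by
  intro y hy
  rw [cube_eq_ball x hr, Metric.mem_ball, dist_eq_norm] at hy
  rw [mem_cube_zero (by linarith)]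
  linarith [norm_le_insert' y x]

lemma cube_subset_shell {n : ℕ} {x : Fin n → ℝ} {r : ℝ} (hr : 0 < r) (hx : r < ‖x‖) {M : ℤ}
    (hM₁ : (2 : ℝ) ^ M ≤ ‖x‖) (hM₂ : ‖x‖ < (2 : ℝ) ^ (M + 1)) :
    cube n x r ⊆ cube n 0 ((2 : ℝ) ^ (M + 3)) \ cube n 0 ((2 : ℝ) ^ M) := by
  intro y hy
  rw [cube_eq_ball x hr, Metric.mem_ball, dist_eq_norm] at hy
  rw [mem_sdiff, mem_cube_zero (zpow_pos two_pos _), mem_cube_zero (zpow_pos two_pos _), not_lt]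
  rw [zpow_add_one₀ two_ne_zero] at hM₂
  have h8 : (2 : ℝ) ^ (M + 3) = 2 ^ M * 8 := by rw [zpow_add₀ two_ne_zero]; norm_num
  constructor
  · linarith [norm_le_insert' y x]
  · linarith [norm_le_insert' x y, norm_sub_rev x y]

lemma inv_one_sub_two_rpow_neg_ne_top {c : ℝ} (hc : 0 < c) : (1 - (2 : ℝ≥0∞) ^ (-c))⁻¹ ≠ ∞ := by
  rw [ENNReal.inv_ne_top, Ne, tsub_eq_zero_iff_le, not_le]
  exact ENNReal.rpow_lt_one_of_one_lt_of_neg one_lt_two (neg_neg_of_pos hc)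

lemma exists_herzNormIndicator_mul_le_volume_cube {n : ℕ} {α p q p' q' : ℝ}
    (hpc : p.HolderConjugate p') (hqc : q.HolderConjugate q')
    (hb : 0 < α + n / p) (hb' : 0 < -α + n / p') :
    ∃ C : ℝ≥0, ∀ (x : Fin n → ℝ) (r : ℝ), 0 < r →
      herzNormIndicator n α p q (cube n x r) * herzNormIndicator n (-α) p' q' (cube n x r) ≤
        C * volume (cube n x r) := by
  set D : ℝ≥0∞ := ((1 - 2 ^ (-((α + n / p) * q)))⁻¹) ^ (1 / q) *
    ((1 - 2 ^ (-((-α + n / p') * q')))⁻¹) ^ (1 / q')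
  have hD_ne_top : D ≠ ∞ := ENNReal.mul_ne_top
    (ENNReal.rpow_ne_top_of_nonneg (by have := hqc.pos; positivity)
      (inv_one_sub_two_rpow_neg_ne_top (mul_pos hb hqc.pos)))
    (ENNReal.rpow_ne_top_of_nonneg (by have := hqc.symm.pos; positivity)
      (inv_one_sub_two_rpow_neg_ne_top (mul_pos hb' hqc.symm.pos)))
  refine ⟨(D * 6 ^ n + 3 * 2 ^ (2 * 3 * |α|)).toNNReal, fun x r hr => ?_⟩
  rw [ENNReal.coe_toNNReal (by finiteness)]
  rcases le_or_gt ‖x‖ r with hx | hx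
  · rw [volume_cube x hr]
    obtain ⟨N, hN₁, hN₂⟩ := exists_mem_Ico_zpow (by positivity : 0 < 3 * r) one_lt_two
    calc _ ≤ D * 2 ^ (((N + 1 : ℤ) : ℝ) * n) :=
          herzNormIndicator_mul_le_of_subset_cube hpc hqc (cube_subset_cube_zero hr hx hN₂.le)
      _ ≤ D * ENNReal.ofReal (6 * r) ^ n := by
          rw [ENNReal.rpow_mul_natCast, ← ofReal_two_rpow, Real.rpow_intCast]
          gcongr D * ?_
          refine pow_le_pow_left' (ENNReal.ofReal_le_ofReal ?_) n
          rw [zpow_add_one₀ two_ne_zero]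
          linarith
      _ = D * 6 ^ n * ENNReal.ofReal r ^ n := by
          rw [ENNReal.ofReal_mul (by norm_num), mul_pow, ENNReal.ofReal_ofNat, mul_assoc D]
      _ ≤ _ := by gcongr; exact le_self_add
  · obtain ⟨M, hM₁, hM₂⟩ := exists_mem_Ico_zpow (hr.trans hx) one_lt_two
    calc _ ≤ ((3 : ℕ) : ℝ≥0∞) * 2 ^ (2 * ((3 : ℕ) : ℝ) * |α|) * volume (cube n x r) :=
          herzNormIndicator_mul_le_of_subset_shell hpc hqc (cube_subset_shell hr hx hM₁ hM₂)
      _ ≤ _ := by gcongr; norm_num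

end ProductHerz

open ProductHerz in
/-- `‖χ_R‖_{K̇_{p,q}^{α}} · ‖χ_R‖_{K̇_{p',q'}^{−α}} ≈ |R|` for all rectangles. -/
theorem herz_char_duality_product (n m : ℕ) (hn : 0 < n) (hm : 0 < m) (α p q : ℝ)
    (hp : 1 < p) (hq : 1 < q)
    (hα₁ : -(n:ℝ)/p < α) (hα₂ : -(m:ℝ)/p < α)
    (hα₃ : α < (n:ℝ) * (1 - 1/p)) (hα₄ : α < (m:ℝ) * (1 - 1/p)) :
    ∃ c C : ℝ≥0, 0 < c ∧
      ∀ (x : Fin n → ℝ) (y : Fin m → ℝ) (r s : ℝ), 0 < r → 0 < s →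
        (c : ℝ≥0∞) * volume (rect n m x y r s) ≤
          herzNormR n m α p q (herzChar n m (rect n m x y r s)) *
            herzNormR n m (-α) (rconj p) (rconj q) (herzChar n m (rect n m x y r s)) ∧
        herzNormR n m α p q (herzChar n m (rect n m x y r s)) *
            herzNormR n m (-α) (rconj p) (rconj q) (herzChar n m (rect n m x y r s)) ≤
          (C : ℝ≥0∞) * volume (rect n m x y r s) := by
  have hpc : p.HolderConjugate (rconj p) := (Real.holderConjugate_iff_eq_conjExponent hp).2 rfl
  have hqc : q.HolderConjugate (rconj q) := (Real.holderConjugate_iff_eq_conjExponent hq).2 rfl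
  have hp' : 1 / rconj p = 1 - 1 / p := by
    have := hpc.inv_add_inv_eq_one
    simp only [one_div]
    linarith
  rw [neg_div] at hα₁ hα₂
  obtain ⟨Cn, hCn⟩ := exists_herzNormIndicator_mul_le_volume_cube (n := n) (α := α) hpc hqc
    (by linarith) (by rw [div_eq_mul_one_div, hp']; linarith)
  obtain ⟨Cm, hCm⟩ := exists_herzNormIndicator_mul_le_volume_cube (n := m) (α := α) hpc hqc
    (by linarith) (by rw [div_eq_mul_one_div, hp']; linarith)
  refine ⟨1, Cn * Cm, one_pos, fun x y r s hr hs => ?_⟩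
  have hQ₁ := measurableSet_cube x hr
  have hQ₂ := measurableSet_cube y hs
  rw [rect, herzNormR_herzChar_prod hpc.pos hqc.pos hQ₁ hQ₂,
    herzNormR_herzChar_prod hpc.symm.pos hqc.symm.pos hQ₁ hQ₂, Measure.volume_eq_prod,
    Measure.prod_prod, mul_mul_mul_comm, ENNReal.coe_one, one_mul, ENNReal.coe_mul,
    mul_mul_mul_comm (Cn : ℝ≥0∞)]
  exact ⟨mul_le_mul' (volume_le_herzNormIndicator_mul hn hpc hqc α hQ₁)
      (volume_le_herzNormIndicator_mul hm hpc hqc α hQ₂),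
    mul_le_mul' (hCn x r hr) (hCm y s hs)⟩
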